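/- Let W ⊆ V_d be a P-submodule. Let i < d be a positive integer with p-adic expansion i = i_0 + i_1 p + ⋯ + i_m p^m (0 ≤ i_j ≤ p−1), and suppose f ∈ S^{d−i}(V_1) is a homogeneous polynomial with f·z^i ∈ W. Let k ≤ i be a nonnegative integer whose p-adic digits k_j satisfy 0 ≤ k_j ≤ i_j for all j, and let x_1^{T_1}⋯x_n^{T_n} be a monomial of degree i − k such that, writing T_l = Σ_j t_{jl} p^j with 0 ≤ t_{jl} ≤ p−1, one has t_{j1} + ⋯ + t_{jn} = i_j − k_j for each j. Then f·x_1^{T_1}⋯x_n^{T_n}·z^k ∈ W. -/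

import Mathlib

/-!
The `P`-module `V_d` underlying the syzygy bundle on `P^n_k` (Trivedi).
`G = GL_{n+1}(k)` and `P ⊂ G` is the maximal parabolic subgroup (block upper
triangular with blocks of sizes `1` and `n`) with `G/P ≅ P^n_k`; homogeneous
`G`-bundles on `P^n_k` correspond to finite dimensional `P`-modules.  Writing
`U₁` for the `k`-vector space with basis `x₁, …, x_n, z` (here the variables of
`MvPolynomial (Fin (n+1)) k`, with `z` the last variable) and
`V₁ = span(x₁, …, x_n)`, the group `P` acts on `U₁` by linear substitutions
preserving `V₁`, and hence on the degree-`d` polynomials `U_d = S^d(U₁)`.  The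
`P`-module corresponding to the syzygy bundle `V_d` is
`V_d = ⊕_{i=0}^{d−1} S^{d−i}(V₁) ⊗ zⁱ ⊂ U_d`.
-/

noncomputable section

open MvPolynomial

/-- The `P`-module `V_d = ⊕_{i=0}^{d-1} S^{d-i}(V₁)·zⁱ`: polynomials in
`x₁, …, x_n, z` all of whose monomials have total degree `d` and `z`-exponent
`< d`. -/
def VdMod (k : Type) [Field k] (n d : ℕ) :
    Submodule k (MvPolynomial (Fin (n + 1)) k) where
  carrier := {f | ∀ m ∈ f.support, (∑ j, m j) = d ∧ m (Fin.last n) < d}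
  add_mem' := by
    intro f g hf hg m hm
    rcases Finset.mem_union.mp (MvPolynomial.support_add hm) with h | h
    · exact hf m h
    · exact hg m h
  zero_mem' := by
    intro m hm
    simp at hm
  smul_mem' := by
    intro c f hf m hm
    exact hf m (MvPolynomial.support_smul hm)

/-- The subspace `(⋯)·zⁱ` of polynomials all of whose monomials have
`z`-exponent exactly `i`; thus `W ⊓ zSlice k n i` is the component
`W(i) = W ∩ (S^{d-i}(V₁) ⊗ zⁱ)` of a submodule `W ≤ V_d`. -/
def zSlice (k : Type) [Field k] (n i : ℕ) :
    Submodule k (MvPolynomial (Fin (n + 1)) k) where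
  carrier := {f | ∀ m ∈ f.support, m (Fin.last n) = i}
  add_mem' := by
    intro f g hf hg m hm
    rcases Finset.mem_union.mp (MvPolynomial.support_add hm) with h | h
    · exact hf m h
    · exact hg m h
  zero_mem' := by
    intro m hm
    simp at hm
  smul_mem' := by
    intro c f hf m hm
    exact hf m (MvPolynomial.support_smul hm)

/-- A matrix `M ∈ GL_{n+1}(k)` lies in (the image in `GL(U₁)` of) the maximal
parabolic `P` iff it is invertible and each `x`-variable is mapped into the span
of the `x`-variables (the substitution sends `X i ↦ ∑ j, M i j • X j`, so this
says `M i z = 0` for every `x`-index `i`); `z` itself may be sent to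
`b·z + a₁x₁ + ⋯ + a_nx_n` with `b ≠ 0`. -/
def IsParabolicSubst {k : Type} [Field k] {n : ℕ}
    (M : Matrix (Fin (n + 1)) (Fin (n + 1)) k) : Prop :=
  IsUnit M.det ∧ ∀ i : Fin (n + 1), i ≠ Fin.last n → M i (Fin.last n) = 0

/-- The algebra endomorphism of `k[x₁, …, x_n, z]` induced by the linear
substitution `X i ↦ ∑ j, M i j • X j`. -/
def substMap {k : Type} [Field k] {n : ℕ}
    (M : Matrix (Fin (n + 1)) (Fin (n + 1)) k) :
    MvPolynomial (Fin (n + 1)) k →ₐ[k] MvPolynomial (Fin (n + 1)) k :=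
  MvPolynomial.aeval fun i => ∑ j, M i j • MvPolynomial.X j

/-- `W` is a `P`-submodule of `V_d`: a `k`-subspace of `V_d` stable under all
parabolic substitutions. -/
def IsPSubmodule {k : Type} [Field k] {n : ℕ} (d : ℕ)
    (W : Submodule k (MvPolynomial (Fin (n + 1)) k)) : Prop :=
  W ≤ VdMod k n d ∧
    ∀ M : Matrix (Fin (n + 1)) (Fin (n + 1)) k,
      IsParabolicSubst M → ∀ f ∈ W, substMap M f ∈ W

/-- The `j`-th digit of the `p`-adic expansion of `i`. -/
def pDigit (p j i : ℕ) : ℕ := i / p ^ j % p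

/-- `f` lies in `S^t(V₁)`: it is a polynomial in the `x`-variables only
(no `z`), homogeneous of degree `t`. -/
def IsXHomog {k : Type} [Field k] {n : ℕ} (t : ℕ)
    (f : MvPolynomial (Fin (n + 1)) k) : Prop :=
  ∀ m ∈ f.support, m (Fin.last n) = 0 ∧ (∑ j, m j) = t

/-!
The transvection `z ↦ z + c·x_l` lies in `P` and fixes `f`, so it sends `f·zⁱ` to
`∑ₛ cˢ·C(i,s)·f·x_lˢ·z^{i-s}`. As `k` is infinite, a polynomial in `c` with coefficients in
`k[x, z] ⧸ W` that vanishes identically is zero, so every term of this sum lies in `W`; by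
Lucas's theorem `C(i,s) ≠ 0` in `k` whenever the `p`-adic digits of `s` are bounded by those
of `i`. Applying this for `l = 1, …, n` in turn with `s = T_l` moves the `z`-exponent onto
the `x`-variables; the digit hypothesis says the subtractions involve no borrows, so the
digit condition persists from one step to the next.
-/

lemma pDigit_zero (p a : ℕ) : pDigit p 0 a = a % p := by simp [pDigit]

lemma pDigit_succ (p j a : ℕ) : pDigit p (j + 1) a = pDigit p j (a / p) := by
  simp [pDigit, Nat.div_div_eq_div_mul, pow_succ, mul_comm]

lemma le_and_pDigit_sub_of_forall_pDigit_le {p : ℕ} (hp : 1 < p) {a b : ℕ}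
    (h : ∀ j, pDigit p j b ≤ pDigit p j a) :
    b ≤ a ∧ ∀ j, pDigit p j (a - b) = pDigit p j a - pDigit p j b := by
  induction b using Nat.strong_induction_on generalizing a with
  | _ b ih =>
  rcases b.eq_zero_or_pos with rfl | hb
  · simp [pDigit]
  obtain ⟨hle, hdig⟩ := ih (b / p) (Nat.div_lt_self hb hp) (a := a / p)
    fun j => by simpa only [pDigit_succ] using h (j + 1)
  have hmod : b % p ≤ a % p := by simpa only [pDigit_zero] using h 0
  have hmul : p * (b / p) ≤ p * (a / p) := Nat.mul_le_mul_left p hle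
  have hsub : a - b = p * (a / p - b / p) + (a % p - b % p) := by
    have := Nat.div_add_mod a p
    have := Nat.div_add_mod b p
    rw [Nat.mul_sub]
    omega
  have hr : a % p - b % p < p := (Nat.sub_le _ _).trans_lt (Nat.mod_lt a (by omega))
  have hmod_sub : (a - b) % p = a % p - b % p := by
    rw [hsub, Nat.mul_add_mod, Nat.mod_eq_of_lt hr]
  have hdiv_sub : (a - b) / p = a / p - b / p := by
    rw [hsub, Nat.mul_add_div (by omega), Nat.div_eq_of_lt hr, add_zero]
  refine ⟨?_, fun j => ?_⟩
  · calc b = p * (b / p) + b % p := (Nat.div_add_mod b p).symm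
      _ ≤ p * (a / p) + a % p := by gcongr
      _ = a := Nat.div_add_mod a p
  · cases j with
    | zero => simp only [pDigit_zero, hmod_sub]
    | succ j => simp only [pDigit_succ, hdiv_sub, hdig]

lemma cast_choose_ne_zero_of_lt {k : Type*} [Field k] {p : ℕ} [CharP k p] (hp : p.Prime)
    {a b : ℕ} (hba : b ≤ a) (hap : a < p) : (a.choose b : k) ≠ 0 := by
  have hfac : (a.factorial : k) ≠ 0 := by
    rw [Ne, CharP.cast_eq_zero_iff k p, hp.dvd_factorial]
    omega
  rw [← Nat.choose_mul_factorial_mul_factorial hba, Nat.cast_mul, Nat.cast_mul] at hfac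
  exact left_ne_zero_of_mul (left_ne_zero_of_mul hfac)

lemma cast_choose_ne_zero_of_forall_pDigit_le {k : Type*} [Field k] {p : ℕ} [CharP k p]
    (hp : p.Prime) {a b : ℕ} (h : ∀ j, pDigit p j b ≤ pDigit p j a) :
    (a.choose b : k) ≠ 0 := by
  have := Fact.mk hp
  have ha : a < p ^ (a + b) := (Nat.le_add_right a b).trans_lt (Nat.lt_pow_self hp.one_lt)
  have hb : b < p ^ (a + b) := (Nat.le_add_left b a).trans_lt (Nat.lt_pow_self hp.one_lt)
  rw [(CharP.natCast_eq_natCast k p).mpr (Choose.choose_modEq_prod_range_choose_nat ha hb),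
    Nat.cast_prod, Finset.prod_ne_zero_iff]
  exact fun j _ => cast_choose_ne_zero_of_lt hp (h j) (Nat.mod_lt _ hp.pos)

lemma Submodule.mem_of_forall_sum_pow_smul_mem {k M : Type*} [Field k] [Infinite k]
    [AddCommGroup M] [Module k M] (W : Submodule k M) {N : ℕ} {v : ℕ → M}
    (h : ∀ c : k, ∑ s ∈ Finset.range N, c ^ s • v s ∈ W) {s : ℕ} (hs : s < N) : v s ∈ W := by
  rw [← Submodule.Quotient.mk_eq_zero, ← Module.forall_dual_apply_eq_zero_iff k]
  intro φ
  let P : Polynomial k := ∑ t ∈ Finset.range N, Polynomial.monomial t (φ (W.mkQ (v t)))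
  have hP : P = 0 := Polynomial.funext fun c => by
    have : φ (W.mkQ (∑ s ∈ Finset.range N, c ^ s • v s)) = 0 := by
      rw [W.mkQ_apply, (Submodule.Quotient.mk_eq_zero W).mpr (h c), map_zero]
    simpa [P, Polynomial.eval_finsetSum, mul_comm] using this
  simpa [P, Polynomial.finsetSum_coeff, Polynomial.coeff_monomial, hs] using
    congrArg (Polynomial.coeff · s) hP

section Transvection

variable {k : Type} [Field k] {n : ℕ}

lemma substMap_transvection_X_of_ne (l : Fin n) (c : k) {a : Fin (n + 1)}
    (ha : a ≠ Fin.last n) :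
    substMap (Matrix.transvection (Fin.last n) l.castSucc c) (X a) = X a := by
  simp [substMap, Matrix.transvection, Matrix.one_apply, Matrix.single_apply, add_smul,
    Finset.sum_add_distrib, Ne.symm ha]

lemma substMap_transvection_X_last (l : Fin n) (c : k) :
    substMap (Matrix.transvection (Fin.last n) l.castSucc c) (X (Fin.last n)) =
      X (Fin.last n) + c • X l.castSucc := by
  simp [substMap, Matrix.transvection, Matrix.one_apply, Matrix.single_apply, add_smul,
    Finset.sum_add_distrib]

lemma substMap_transvection_of_mem_supported (l : Fin n) (c : k)
    {g : MvPolynomial (Fin (n + 1)) k} (hg : g ∈ supported k {Fin.last n}ᶜ) :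
    substMap (Matrix.transvection (Fin.last n) l.castSucc c) g = g := by
  have : supported k ({Fin.last n}ᶜ : Set (Fin (n + 1))) ≤
      AlgHom.equalizer (substMap (Matrix.transvection (Fin.last n) l.castSucc c))
        (AlgHom.id k _) :=
    Algebra.adjoin_le (by rintro _ ⟨a, ha, rfl⟩; exact substMap_transvection_X_of_ne l c ha)
  exact this hg

lemma isParabolicSubst_transvection (l : Fin n) (c : k) :
    IsParabolicSubst (Matrix.transvection (Fin.last n) l.castSucc c) := by
  refine ⟨by simp [Matrix.det_transvection_of_ne _ _ (Fin.castSucc_lt_last l).ne'], ?_⟩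
  intro a ha
  simp [Matrix.transvection, ha, (Fin.castSucc_lt_last l).ne]

lemma substMap_transvection_mul_X_last_pow (l : Fin n) (c : k)
    {g : MvPolynomial (Fin (n + 1)) k} (hg : g ∈ supported k {Fin.last n}ᶜ) (i : ℕ) :
    substMap (Matrix.transvection (Fin.last n) l.castSucc c) (g * X (Fin.last n) ^ i) =
      ∑ s ∈ Finset.range (i + 1),
        c ^ s • ((i.choose s : k) • (g * X l.castSucc ^ s * X (Fin.last n) ^ (i - s))) := by
  rw [map_mul, map_pow, substMap_transvection_of_mem_supported l c hg,
    substMap_transvection_X_last, add_comm (X _), add_pow, Finset.mul_sum]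
  refine Finset.sum_congr rfl fun s _ => ?_
  simp only [Algebra.smul_def, map_pow, map_natCast]
  ring

end Transvection

section Extraction

variable {k : Type} [Field k] [Infinite k] {n : ℕ}
  {W : Submodule k (MvPolynomial (Fin (n + 1)) k)}
  (hW : ∀ M, IsParabolicSubst M → ∀ f ∈ W, substMap M f ∈ W)
  {g : MvPolynomial (Fin (n + 1)) k} (hg : g ∈ supported k {Fin.last n}ᶜ)
include hW hg

lemma choose_smul_mul_X_pow_mul_X_last_pow_mem {i : ℕ} (hmem : g * X (Fin.last n) ^ i ∈ W)
    (l : Fin n) {s : ℕ} (hs : s ≤ i) :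
    (i.choose s : k) • (g * X l.castSucc ^ s * X (Fin.last n) ^ (i - s)) ∈ W := by
  refine W.mem_of_forall_sum_pow_smul_mem
    (v := fun s => (i.choose s : k) • (g * X l.castSucc ^ s * X (Fin.last n) ^ (i - s)))
    (fun c => ?_) (Nat.lt_succ_of_le hs)
  rw [← substMap_transvection_mul_X_last_pow l c hg]
  exact hW _ (isParabolicSubst_transvection l c) _ hmem

lemma mul_X_pow_mul_X_last_pow_mem {p : ℕ} [CharP k p] (hp : p.Prime) {i : ℕ}
    (hmem : g * X (Fin.last n) ^ i ∈ W) (l : Fin n) {s : ℕ}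
    (hs : ∀ j, pDigit p j s ≤ pDigit p j i) :
    g * X l.castSucc ^ s * X (Fin.last n) ^ (i - s) ∈ W :=
  (W.smul_mem_iff (cast_choose_ne_zero_of_forall_pDigit_le hp hs)).mp
    (choose_smul_mul_X_pow_mul_X_last_pow_mem hW hg hmem l
      (le_and_pDigit_sub_of_forall_pDigit_le hp.one_lt hs).1)

end Extraction

lemma mul_prod_X_pow_mul_X_last_pow_mem {k : Type} [Field k] [Infinite k] {n p : ℕ} [CharP k p]
    (hp : p.Prime) {W : Submodule k (MvPolynomial (Fin (n + 1)) k)}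
    (hW : ∀ M, IsParabolicSubst M → ∀ f ∈ W, substMap M f ∈ W) (T : Fin n → ℕ) (K : ℕ)
    (S : Finset (Fin n)) {g : MvPolynomial (Fin (n + 1)) k}
    (hg : g ∈ supported k {Fin.last n}ᶜ)
    (hdig : ∀ j, pDigit p j (K + ∑ l ∈ S, T l) = pDigit p j K + ∑ l ∈ S, pDigit p j (T l))
    (hmem : g * X (Fin.last n) ^ (K + ∑ l ∈ S, T l) ∈ W) :
    g * (∏ l ∈ S, X l.castSucc ^ T l) * X (Fin.last n) ^ K ∈ W := by
  induction S using Finset.induction_on generalizing g with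
  | empty => simpa using hmem
  | insert a S ha ih =>
    rw [Finset.sum_insert ha] at hmem
    simp only [Finset.sum_insert ha] at hdig
    have hle : ∀ j, pDigit p j (T a) ≤ pDigit p j (K + (T a + ∑ l ∈ S, T l)) := fun j => by
      rw [hdig j]; omega
    have hexp : K + (T a + ∑ l ∈ S, T l) - T a = K + ∑ l ∈ S, T l := by omega
    have hsub := (le_and_pDigit_sub_of_forall_pDigit_le hp.one_lt hle).2
    simp only [hexp] at hsub
    have hstep := mul_X_pow_mul_X_last_pow_mem hW hg hp hmem a hle
    rw [hexp] at hstep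
    have hga : g * X a.castSucc ^ T a ∈ supported k {Fin.last n}ᶜ :=
      Subalgebra.mul_mem _ hg (Subalgebra.pow_mem _
        (X_mem_supported.mpr (Fin.castSucc_lt_last a).ne) _)
    have := ih hga (fun j => by rw [hsub j, hdig j]; omega) hstep
    rwa [Finset.prod_insert ha, ← mul_assoc]

lemma IsXHomog.mem_supported {k : Type} [Field k] {n t : ℕ}
    {f : MvPolynomial (Fin (n + 1)) k} (hf : IsXHomog t f) :
    f ∈ supported k {Fin.last n}ᶜ := by
  rw [MvPolynomial.mem_supported]
  intro a ha rfl
  obtain ⟨m, hm, ham⟩ := (mem_vars_iff_mem_support _).mp ha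
  exact Finsupp.mem_support_iff.mp ham (hf m hm).1

theorem P_submodule_monomial_closure_general
    (k : Type) [Field k] [IsAlgClosed k] (p n d : ℕ) [CharP k p]
    (hp : 0 < p)
    (W : Submodule k (MvPolynomial (Fin (n + 1)) k))
    (hW : IsPSubmodule d W)
    (i : ℕ)
    (f : MvPolynomial (Fin (n + 1)) k) (hf : IsXHomog (d - i) f)
    (hfW : f * MvPolynomial.X (Fin.last n) ^ i ∈ W)
    (K : ℕ) (hK : K ≤ i)
    (hKdig : ∀ j : ℕ, pDigit p j K ≤ pDigit p j i)
    (T : Fin n → ℕ) (hT : (∑ l, T l) = i - K)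
    (hTdig : ∀ j : ℕ, (∑ l, pDigit p j (T l)) = pDigit p j i - pDigit p j K) :
    f * (∏ l : Fin n, MvPolynomial.X (Fin.castSucc l) ^ T l) *
      MvPolynomial.X (Fin.last n) ^ K ∈ W := by
  have hprime : p.Prime := (CharP.char_is_prime_or_zero k p).resolve_right hp.ne'
  have hi : K + ∑ l, T l = i := by omega
  refine mul_prod_X_pow_mul_X_last_pow_mem hprime hW.2 T K Finset.univ hf.mem_supported
    (fun j => ?_) (hi ▸ hfW)
  rw [hi, hTdig j]
  have := hKdig j
  omega

/-- Let `W ⊆ V_d` be a `P`-submodule.  Let `i < d` be a positive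
integer with `p`-adic digits `i_j`, and suppose `f ∈ S^{d−i}(V₁)` satisfies
`f·zⁱ ∈ W`.  Let `K ≤ i` be a nonnegative integer whose `p`-adic digits `k_j`
satisfy `k_j ≤ i_j` for all `j`, and let `x₁^{T₁}⋯x_n^{T_n}` be a monomial of
degree `i − K` such that for each `j` the `j`-th digits `t_{jl}` of the `T_l`
satisfy `t_{j1} + ⋯ + t_{jn} = i_j − k_j`.  Then
`f·x₁^{T₁}⋯x_n^{T_n}·z^K ∈ W`. -/
theorem P_submodule_monomial_closure
    (k : Type) [Field k] [IsAlgClosed k] (p n d : ℕ) [CharP k p]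
    (hp : 0 < p) (hn : 2 ≤ n)
    (W : Submodule k (MvPolynomial (Fin (n + 1)) k))
    (hW : IsPSubmodule d W)
    (i : ℕ) (hi0 : 0 < i) (hid : i < d)
    (f : MvPolynomial (Fin (n + 1)) k) (hf : IsXHomog (d - i) f)
    (hfW : f * MvPolynomial.X (Fin.last n) ^ i ∈ W)
    (K : ℕ) (hK : K ≤ i)
    (hKdig : ∀ j : ℕ, pDigit p j K ≤ pDigit p j i)
    (T : Fin n → ℕ) (hT : (∑ l, T l) = i - K)
    (hTdig : ∀ j : ℕ, (∑ l, pDigit p j (T l)) = pDigit p j i - pDigit p j K) :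
    f * (∏ l : Fin n, MvPolynomial.X (Fin.castSucc l) ^ T l) *
      MvPolynomial.X (Fin.last n) ^ K ∈ W :=
  P_submodule_monomial_closure_general k p n d hp W hW i f hf hfW K hK hKdig T hT hTdig
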